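/- Let α ∈ ℂ with |α| ≤ 1 and α ≠ 1. Then for every z ∈ ℂ with |z| ≤ 2 one has α·exp((α−1)z/8) ≠ 1 and |T_α(z)| ≤ 1, and if moreover |z| < 2 then |T_α(z)| < 1. Consequently, for every z with |z| ≤ 2 the orbit of z under T_α is well-defined and converges to 0; in particular the asymptotic value 1 lies in the basin of attraction of the fixed point 0. -/

import Mathlib

open Filter

/-- The model family `T_α(z) = (e^{(α−1)z/8} − 1)/(α e^{(α−1)z/8} − 1)`,
as a total function with the convention that division by zero yields 0. -/
noncomputable def T (α z : ℂ) : ℂ :=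
  (Complex.exp ((α - 1) * z / 8) - 1) / (α * Complex.exp ((α - 1) * z / 8) - 1)

/-- The orbit of `z` under `T_α` is well-defined: no iterate hits a pole. -/
def orbitWD (α z : ℂ) : Prop :=
  ∀ n : ℕ, α * Complex.exp ((α - 1) * ((T α)^[n] z) / 8) ≠ 1

lemma key_step (α : ℂ) (hα : ‖α‖ ≤ 1) (hα1 : α ≠ 1) (z : ℂ)
    (hz : ‖z‖ ≤ 2) :
    α * Complex.exp ((α - 1) * z / 8) ≠ 1 ∧
      ‖T α z‖ ≤ ‖z‖ / 2 := by
  set u : ℂ := (α - 1) * z / 8 with hu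
  set a : ℝ := ‖α - 1‖ with hadef
  have ha : 0 < a := by
    simpa [hadef] using (norm_pos_iff.2 (sub_ne_zero.2 hα1))
  have ha2 : a ≤ 2 := by
    calc a ≤ ‖α‖ + ‖1‖ := norm_sub_le α 1
    _ ≤ 2 := by simp; linarith
  have habs_u : ‖u‖ = a * ‖z‖ / 8 := by
    simp [hu, hadef, map_mul, map_div₀]
  have hu1 : ‖u‖ ≤ 1 := by
    rw [habs_u]; nlinarith [norm_nonneg z]
  have hnum : ‖Complex.exp u - 1‖ ≤ a * ‖z‖ / 4 := by
    have := Complex.norm_exp_sub_one_le hu1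
    rw [habs_u] at this; linarith
  have hnum2 : ‖Complex.exp u - 1‖ ≤ a / 2 := by
    nlinarith
  have hden : a / 2 ≤ ‖α * Complex.exp u - 1‖ := by
    have hid : (α - 1 : ℂ) = (α * Complex.exp u - 1) - α * (Complex.exp u - 1) := by ring
    have htri : a ≤ ‖α * Complex.exp u - 1‖
        + ‖α * (Complex.exp u - 1)‖ := by
      calc a = ‖(α * Complex.exp u - 1) - α * (Complex.exp u - 1)‖ := by
            rw [hadef, hid]
        _ ≤ _ := norm_sub_le _ _
    have : ‖α * (Complex.exp u - 1)‖ ≤ a / 2 := by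
      rw [norm_mul]
      calc ‖α‖ * ‖Complex.exp u - 1‖
          ≤ 1 * (a / 2) := by
            apply mul_le_mul hα hnum2 (norm_nonneg _) (by norm_num)
        _ = a / 2 := one_mul _
    linarith
  have hdenpos : 0 < ‖α * Complex.exp u - 1‖ := lt_of_lt_of_le (by linarith) hden
  constructor
  · intro h
    have h0 : α * Complex.exp u - 1 = 0 := sub_eq_zero.mpr h
    rw [h0] at hdenpos
    simp at hdenpos
  · have : ‖T α z‖ =
        ‖Complex.exp u - 1‖ / ‖α * Complex.exp u - 1‖ := by
      rw [T, norm_div]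
    rw [this]
    calc ‖Complex.exp u - 1‖ / ‖α * Complex.exp u - 1‖
        ≤ (a * ‖z‖ / 4) / (a / 2) :=
          div_le_div₀ (by positivity) hnum (by linarith) hden
      _ = ‖z‖ / 2 := by field_simp; ring

/-- For `|α| ≤ 1`, `α ≠ 1`: every `z` with `|z| ≤ 2` is not a pole of `T_α` and
`|T_α(z)| ≤ 1` (with strict inequality if `|z| < 2`); consequently the orbit of any such `z`
is well-defined and converges to `0`; in particular the asymptotic value `1` lies in the
basin of attraction of the fixed point `0`. -/
theorem closed_disk_two_in_basin (α : ℂ) (hα : ‖α‖ ≤ 1) (hα1 : α ≠ 1) :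
    (∀ z : ℂ, ‖z‖ ≤ 2 →
      α * Complex.exp ((α - 1) * z / 8) ≠ 1 ∧ ‖T α z‖ ≤ 1) ∧
    (∀ z : ℂ, ‖z‖ < 2 → ‖T α z‖ < 1) ∧
    (∀ z : ℂ, ‖z‖ ≤ 2 →
      orbitWD α z ∧ Tendsto (fun n => (T α)^[n] z) atTop (nhds 0)) ∧
    (orbitWD α 1 ∧ Tendsto (fun n => (T α)^[n] 1) atTop (nhds 0)) := by
  have key := key_step α hα hα1
  have main : ∀ z : ℂ, ‖z‖ ≤ 2 →
      orbitWD α z ∧ Tendsto (fun n => (T α)^[n] z) atTop (nhds 0) := by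
    intro z hz
    have hbound : ∀ n : ℕ, ‖(T α)^[n] z‖ ≤ ‖z‖ / 2 ^ n := by
      intro n
      induction n with
      | zero => simp
      | succ n ih =>
        have h2 : ‖(T α)^[n] z‖ ≤ 2 := by
          calc ‖(T α)^[n] z‖ ≤ ‖z‖ / 2 ^ n := ih
            _ ≤ 2 / 2 ^ n := by
                apply div_le_div_of_nonneg_right hz (by positivity)
                |>.trans_eq rfl
            _ ≤ 2 := by
                rw [div_le_iff₀ (by positivity)]
                nlinarith [one_le_pow₀ (by norm_num : (1:ℝ) ≤ 2) (n := n)]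
        rw [Function.iterate_succ_apply']
        calc ‖T α ((T α)^[n] z)‖ ≤ ‖(T α)^[n] z‖ / 2 :=
              (key _ h2).2
          _ ≤ (‖z‖ / 2 ^ n) / 2 := by linarith
          _ = ‖z‖ / 2 ^ (n + 1) := by ring
    have h2 : ∀ n : ℕ, ‖(T α)^[n] z‖ ≤ 2 := by
      intro n
      calc ‖(T α)^[n] z‖ ≤ ‖z‖ / 2 ^ n := hbound n
        _ ≤ 2 := by
          rw [div_le_iff₀ (by positivity)]
          nlinarith [one_le_pow₀ (by norm_num : (1:ℝ) ≤ 2) (n := n),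
            norm_nonneg z]
    refine ⟨fun n => (key _ (h2 n)).1, ?_⟩
    rw [tendsto_zero_iff_norm_tendsto_zero]
    apply squeeze_zero (fun n => norm_nonneg _) (fun n => hbound n)
    have : (fun n : ℕ => ‖z‖ / 2 ^ n) =
        fun n : ℕ => ‖z‖ * (1 / 2 : ℝ) ^ n := by
      funext n; rw [div_pow]; ring
    rw [this]
    simpa using (tendsto_pow_atTop_nhds_zero_of_lt_one (by norm_num : (0:ℝ) ≤ 1/2)
      (by norm_num : (1/2:ℝ) < 1)).const_mul (‖z‖)
  refine ⟨fun z hz => ⟨(key z hz).1, ?_⟩, fun z hz => ?_, main, main 1 (by simp)⟩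
  · linarith [(key z hz).2]
  · have := (key z hz.le).2
    linarith
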